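/- arXiv:2010.02857 — 2 statements merged into one kernel-verified Lean document; each statement's English description precedes it below -/
import Mathlib

section
/- Let H > 0, κ ≥ 0, h = √3·H/2, and let x' ∈ ℝ³ with |x'| ≤ h. Consider the change of variables x(s, θ, φ) = (h/s)·(sin θ cos φ, sin θ sin φ, cos θ) and set G(s, θ, φ) = g_S(x(s, θ, φ), x') for s > 0, where g_S(x, x') = (|x|/|x − x'|)·e^{iκ(|x − x'| − |x|)}. Then for each fixed (θ₀, φ₀) there exist ε > 0 and a function F, (real-)analytic on (−ε, ε) × (θ₀ − ε, θ₀ + ε) × (φ₀ − ε, φ₀ + ε), such that F(s, θ, φ) = G(s, θ, φ) whenever 0 < s < ε; i.e., g_S admits an analytic extension in the variables (s, θ, φ) up to and including s = 0 (corresponding to r = |x| = ∞). -/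
set_option autoImplicit false

noncomputable section

/-- The spherical parametrization `x̃(r, θ, φ)` of `ℝ³`. -/
noncomputable def sph (r θ φ : ℝ) : EuclideanSpace ℝ (Fin 3) :=
  WithLp.toLp 2 ![r * Real.sin θ * Real.cos φ, r * Real.sin θ * Real.sin φ, r * Real.cos θ]

/-- The analytic factor `g_S(x, x') = (‖x‖/‖x − x'‖) · exp(iκ(‖x − x'‖ − ‖x‖))`. -/
noncomputable def gS (κ : ℝ) (x x' : EuclideanSpace ℝ (Fin 3)) : ℂ :=
  (↑(‖x‖ / ‖x - x'‖) : ℂ) * Complex.exp (Complex.I * κ * (↑‖x - x'‖ - ↑‖x‖))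

/-!
Write `x = t⁻¹ u` with `t = s / h` and `u` a unit vector, and set
`Q = 1 - 2 t ⟪u, x'⟫ + t² ‖x'‖² = ‖x - x'‖² / ‖x‖²`. Then `‖x‖ / ‖x - x'‖ = Q^(-1/2)`, and
rationalising `‖x - x'‖ - ‖x‖ = t⁻¹ (√Q - 1)` gives `(t ‖x'‖² - 2 ⟪u, x'⟫) / (√Q + 1)`, in which
the pole at `t = 0` has cancelled. The resulting expression is analytic in `(t, u)` wherever
`Q > 0`, and `‖x'‖ ≤ h` makes `Q > 0` for `|s| < 1/2`.
-/

open Real Complex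
open scoped ContDiff RealInnerProductSpace

@[fun_prop]
lemma ContDiffAt.ofReal {E : Type*} [NormedAddCommGroup E] [NormedSpace ℝ E] {f : E → ℝ}
    {x : E} {n : WithTop ℕ∞} (hf : ContDiffAt ℝ n f x) :
    ContDiffAt ℝ n (fun y => (f y : ℂ)) x :=
  ofRealCLM.contDiff.contDiffAt.comp x hf

lemma sph_eq_smul (r θ φ : ℝ) : sph r θ φ = r • sph 1 θ φ := by
  ext i
  fin_cases i <;> simp [sph, mul_assoc]

lemma norm_sph_one (θ φ : ℝ) : ‖sph 1 θ φ‖ = 1 := by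
  rw [EuclideanSpace.norm_eq, Real.sqrt_eq_one]
  simp only [sph, Fin.sum_univ_three, Real.norm_eq_abs, sq_abs, one_mul, Matrix.cons_val_zero,
    Matrix.cons_val_one, Matrix.cons_val_two, Matrix.head_cons, Matrix.tail_cons]
  linear_combination Real.sin θ ^ 2 * Real.sin_sq_add_cos_sq φ + Real.sin_sq_add_cos_sq θ

lemma contDiff_sph {n : WithTop ℕ∞} :
    ContDiff ℝ n (fun q : ℝ × ℝ × ℝ => sph q.1 q.2.1 q.2.2) := by
  refine (contDiff_piLp 2).2 fun i => ?_
  fin_cases i <;> simp only [sph] <;> simp <;> fun_prop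

/-- The squared ratio `‖t⁻¹ u - y‖² / ‖t⁻¹ u‖²` for a unit vector `u`, in terms of
`p = ⟪u, y⟫` and `m = ‖y‖²`. -/
def relDistSq (t p m : ℝ) : ℝ := 1 - 2 * t * p + t ^ 2 * m

lemma relDistSq_pos {t p m : ℝ} (hm : 0 ≤ m) (htp : 2 * |t * p| < 1) : 0 < relDistSq t p m := by
  unfold relDistSq
  nlinarith [le_abs_self (t * p), mul_nonneg (sq_nonneg t) hm]

lemma relDistSq_inner_eq_norm_sub_sq {E : Type*} [NormedAddCommGroup E] [InnerProductSpace ℝ E]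
    {u : E} (hu : ‖u‖ = 1) (y : E) (t : ℝ) :
    relDistSq t ⟪u, y⟫ (‖y‖ ^ 2) = ‖u - t • y‖ ^ 2 := by
  rw [norm_sub_sq_real, hu, inner_smul_right, norm_smul, Real.norm_eq_abs, relDistSq, mul_pow,
    sq_abs]
  ring

lemma norm_inv_smul_sub {E : Type*} [NormedAddCommGroup E] [InnerProductSpace ℝ E] {u : E}
    (hu : ‖u‖ = 1) (y : E) {t : ℝ} (ht : 0 < t) :
    ‖t⁻¹ • u - y‖ = t⁻¹ * √(relDistSq t ⟪u, y⟫ (‖y‖ ^ 2)) := by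
  rw [relDistSq_inner_eq_norm_sub_sq hu, Real.sqrt_sq (norm_nonneg _),
    show t⁻¹ • u - y = t⁻¹ • (u - t • y) by rw [smul_sub, inv_smul_smul₀ ht.ne'],
    norm_smul, Real.norm_eq_abs, abs_of_pos (inv_pos.2 ht)]

/-- `gS κ (t⁻¹ u) y` for a unit vector `u`, with `p = ⟪u, y⟫` and `m = ‖y‖²`, written so that it
extends analytically across `t = 0`. -/
def gSExtension (κ t p m : ℝ) : ℂ :=
  (√(relDistSq t p m) : ℂ)⁻¹ *
    exp (I * κ * (((t * m - 2 * p) / (√(relDistSq t p m) + 1) : ℝ) : ℂ))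

lemma gS_inv_smul {u : EuclideanSpace ℝ (Fin 3)} (hu : ‖u‖ = 1) (κ : ℝ)
    (y : EuclideanSpace ℝ (Fin 3)) {t : ℝ} (ht : 0 < t) :
    gS κ (t⁻¹ • u) y = gSExtension κ t ⟪u, y⟫ (‖y‖ ^ 2) := by
  have hρsq : √(relDistSq t ⟪u, y⟫ (‖y‖ ^ 2)) ^ 2 = relDistSq t ⟪u, y⟫ (‖y‖ ^ 2) :=
    Real.sq_sqrt (relDistSq_inner_eq_norm_sub_sq hu y t ▸ sq_nonneg _)
  rw [gS, gSExtension, norm_inv_smul_sub hu y ht, norm_smul, hu, Real.norm_eq_abs,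
    abs_of_pos (inv_pos.2 ht), mul_one]
  set ρ := √(relDistSq t ⟪u, y⟫ (‖y‖ ^ 2))
  have hexponent : t⁻¹ * ρ - t⁻¹ = (t * ‖y‖ ^ 2 - 2 * ⟪u, y⟫) / (ρ + 1) := by
    rw [eq_div_iff (by positivity)]
    field_simp
    rw [relDistSq] at hρsq
    linear_combination hρsq
  rw [div_mul_cancel_left₀ (inv_ne_zero ht.ne'), ← hexponent]
  push_cast
  ring

lemma ContDiffAt.gSExtension {E : Type*} [NormedAddCommGroup E] [NormedSpace ℝ E]
    {t p : E → ℝ} {x : E} {n : WithTop ℕ∞} (κ m : ℝ) (ht : ContDiffAt ℝ n t x)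
    (hp : ContDiffAt ℝ n p x) (hQ : 0 < relDistSq (t x) (p x) m) :
    ContDiffAt ℝ n (fun y => gSExtension κ (t y) (p y) m) x := by
  have hρ : 0 < √(relDistSq (t x) (p x) m) := Real.sqrt_pos.2 hQ
  unfold _root_.gSExtension
  unfold relDistSq at hQ hρ ⊢
  fun_prop (disch := first | positivity | exact hQ.ne' | exact_mod_cast hρ.ne')

theorem gS_extends_analytically_to_s_eq_zero_general (H κ : ℝ) (hH : 0 < H)
    (x' : EuclideanSpace ℝ (Fin 3)) (hx' : ‖x'‖ ≤ Real.sqrt 3 * H / 2)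
    (θ₀ φ₀ : ℝ) :
    ∃ ε > 0, ∃ F : ℝ × ℝ × ℝ → ℂ,
      AnalyticOnNhd ℝ F
        (Set.Ioo (-ε) ε ×ˢ Set.Ioo (θ₀ - ε) (θ₀ + ε) ×ˢ Set.Ioo (φ₀ - ε) (φ₀ + ε)) ∧
      ∀ s θ φ : ℝ, 0 < s → s < ε → θ ∈ Set.Ioo (θ₀ - ε) (θ₀ + ε) →
        φ ∈ Set.Ioo (φ₀ - ε) (φ₀ + ε) →
        F (s, θ, φ) = gS κ (sph (Real.sqrt 3 * H / 2 / s) θ φ) x' := by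
  set h := Real.sqrt 3 * H / 2
  have hh : 0 < h := by positivity
  refine ⟨1 / 2, by norm_num,
    fun q => gSExtension κ (q.1 / h) ⟪sph 1 q.2.1 q.2.2, x'⟫ (‖x'‖ ^ 2), ?_, ?_⟩
  · rintro ⟨s, θ, φ⟩ ⟨hs, -⟩
    have hinner : |⟪sph 1 θ φ, x'⟫| ≤ h :=
      (abs_real_inner_le_norm _ _).trans (by rw [norm_sph_one, one_mul]; exact hx')
    refine (ContDiffAt.gSExtension κ _ (by fun_prop)
      ((contDiff_sph.comp (contDiff_const.prodMk contDiff_snd)).inner ℝ contDiff_const).contDiffAt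
      (relDistSq_pos (sq_nonneg _) ?_)).analyticAt
    calc 2 * |s / h * ⟪sph 1 θ φ, x'⟫| ≤ 2 * (|s| / h * h) := by
          rw [abs_mul, abs_div, abs_of_pos hh]; gcongr
      _ < 1 := by rw [div_mul_cancel₀ _ hh.ne']; linarith [abs_lt.2 ⟨hs.1, hs.2⟩]
  · intro s θ φ hs _ _ _
    rw [sph_eq_smul, ← inv_div, gS_inv_smul (norm_sph_one θ φ) κ x' (by positivity)]

/-- with `h = √3·H/2`, `‖x'‖ ≤ h`, and the change of variables
`x(s, θ, φ) = x̃(h/s, θ, φ)`, the function `G(s, θ, φ) = g_S(x(s,θ,φ), x')` admits,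
around any `(0, θ₀, φ₀)`, a real-analytic extension `F` up to and including `s = 0`:
`F` is analytic on `(−ε, ε) × (θ₀−ε, θ₀+ε) × (φ₀−ε, φ₀+ε)` and agrees with `G`
there whenever `0 < s < ε`. -/
theorem gS_extends_analytically_to_s_eq_zero (H κ : ℝ) (hH : 0 < H) (hκ : 0 ≤ κ)
    (x' : EuclideanSpace ℝ (Fin 3)) (hx' : ‖x'‖ ≤ Real.sqrt 3 * H / 2)
    (θ₀ φ₀ : ℝ) :
    ∃ ε > 0, ∃ F : ℝ × ℝ × ℝ → ℂ,
      AnalyticOnNhd ℝ F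
        (Set.Ioo (-ε) ε ×ˢ Set.Ioo (θ₀ - ε) (θ₀ + ε) ×ˢ Set.Ioo (φ₀ - ε) (φ₀ + ε)) ∧
      ∀ s θ φ : ℝ, 0 < s → s < ε → θ ∈ Set.Ioo (θ₀ - ε) (θ₀ + ε) →
        φ ∈ Set.Ioo (φ₀ - ε) (φ₀ + ε) →
        F (s, θ, φ) = gS κ (sph (Real.sqrt 3 * H / 2 / s) θ φ) x' :=
  gS_extends_analytically_to_s_eq_zero_general H κ hH x' hx' θ₀ φ₀
end
end

section
/- Let H > 0, κ ≥ 0, h = √3·H/2, and let x' ∈ ℝ³ with |x'| ≤ h. Then for every s ∈ (0, 1), θ ∈ [0, π], φ ∈ [0, 2π), the function (s, θ, φ) ↦ g_S(x(s, θ, φ), x'), where x(s, θ, φ) = (h/s)·(sin θ cos φ, sin θ sin φ, cos θ) and g_S(x, x') = (|x|/|x − x'|)·e^{iκ(|x − x'| − |x|)}, is (real-)analytic at the point (s, θ, φ). -/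
/-!
`g_S(·, x')` is assembled from `‖x‖` and `‖x − x'‖` by products, a quotient and `exp`, and the
norm of a real inner product space is analytic away from `0`. Along the parametrization both
norms are nonzero, since `‖x(s, θ, φ)‖ = h / s > h ≥ ‖x'‖`, and `(s, θ, φ) ↦ x(s, θ, φ)` is
analytic wherever `s ≠ 0`.
-/

set_option autoImplicit false

noncomputable section

theorem analyticAt_norm {E : Type*} [NormedAddCommGroup E] [InnerProductSpace ℝ E] {x : E}
    (hx : x ≠ 0) : AnalyticAt ℝ norm x :=
  (contDiffAt_norm ℝ hx).analyticAt

theorem analyticAt_gS (κ : ℝ) {x x' : EuclideanSpace ℝ (Fin 3)} (hx : x ≠ 0) (hxx' : x ≠ x') :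
    AnalyticAt ℝ (fun y => gS κ y x') x := by
  have hnorm : AnalyticAt ℝ (fun y : EuclideanSpace ℝ (Fin 3) => ‖y‖) x := analyticAt_norm hx
  have hdist : AnalyticAt ℝ (fun y : EuclideanSpace ℝ (Fin 3) => ‖y - x'‖) x :=
    (analyticAt_norm (sub_ne_zero.2 hxx')).comp (f := fun y => y - x')
      (analyticAt_id.sub analyticAt_const)
  have hofReal : ∀ {f : EuclideanSpace ℝ (Fin 3) → ℝ}, AnalyticAt ℝ f x →
      AnalyticAt ℝ (fun y => (f y : ℂ)) x :=
    fun hf => Complex.ofRealCLM.analyticAt _ |>.comp hf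
  unfold gS
  exact (hofReal (hnorm.div hdist (norm_ne_zero_iff.2 (sub_ne_zero.2 hxx')))).mul
    ((analyticAt_cexp.restrictScalars).comp
      (analyticAt_const.mul ((hofReal hdist).sub (hofReal hnorm))))

open scoped ContDiff in
theorem contDiff_sph_s2 : ContDiff ℝ ω (fun p : ℝ × ℝ × ℝ => sph p.1 p.2.1 p.2.2) := by
  refine (EuclideanSpace.equiv (Fin 3) ℝ).symm.contDiff.comp (contDiff_pi.2 fun i => ?_)
  fin_cases i <;>
    simp only [Fin.zero_eta, Fin.mk_one, Fin.reduceFinMk, Matrix.cons_val_zero,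
      Matrix.cons_val_one, Matrix.cons_val] <;>
    fun_prop

theorem norm_sph {r : ℝ} (hr : 0 ≤ r) (θ φ : ℝ) : ‖sph r θ φ‖ = r := by
  rw [EuclideanSpace.norm_eq, Fin.sum_univ_three]
  conv_rhs => rw [← Real.sqrt_sq hr]
  congr 1
  simp only [sph, Real.norm_eq_abs, sq_abs, PiLp.toLp_apply, Matrix.cons_val_zero,
    Matrix.cons_val_one, Matrix.cons_val_two, Matrix.head_cons, Matrix.tail_cons]
  linear_combination r ^ 2 * Real.sin θ ^ 2 * Real.sin_sq_add_cos_sq φ +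
    r ^ 2 * Real.sin_sq_add_cos_sq θ

theorem analyticAt_gS_in_s_theta_phi_general (H κ : ℝ) (hH : 0 < H)
    (x' : EuclideanSpace ℝ (Fin 3)) (hx' : ‖x'‖ ≤ Real.sqrt 3 * H / 2)
    (s θ φ : ℝ) (hs : s ∈ Set.Ioo (0 : ℝ) 1) :
    AnalyticAt ℝ
      (fun p : ℝ × ℝ × ℝ => gS κ (sph (Real.sqrt 3 * H / 2 / p.1) p.2.1 p.2.2) x')
      (s, θ, φ) := by
  set h := Real.sqrt 3 * H / 2
  obtain ⟨hs0, hs1⟩ := hs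
  have hh : 0 < h := by positivity
  have hhs : h < h / s := (lt_div_iff₀ hs0).2 (by nlinarith)
  have hnorm : ‖sph (h / s) θ φ‖ = h / s := norm_sph (by positivity) θ φ
  have hx : sph (h / s) θ φ ≠ 0 := norm_ne_zero_iff.1 (by linarith)
  have hxx' : sph (h / s) θ φ ≠ x' := by
    rintro rfl
    linarith
  have hcoord : AnalyticAt ℝ (fun p : ℝ × ℝ × ℝ => (h / p.1, p.2)) (s, θ, φ) :=
    (analyticAt_const.div analyticAt_fst hs0.ne').prod analyticAt_snd
  exact (analyticAt_gS κ hx hxx').comp (f := fun p : ℝ × ℝ × ℝ => sph (h / p.1) p.2.1 p.2.2)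
    (contDiff_sph_s2.contDiffAt.analyticAt.comp hcoord)

/-- with `h = √3·H/2` and `‖x'‖ ≤ h`, the function
`(s, θ, φ) ↦ g_S(x(s,θ,φ), x')`, where `x(s,θ,φ) = x̃(h/s, θ, φ)`, is real-analytic
at every point with `s ∈ (0,1)`, `θ ∈ [0,π]`, `φ ∈ [0,2π)`. -/
theorem analyticAt_gS_in_s_theta_phi (H κ : ℝ) (hH : 0 < H) (hκ : 0 ≤ κ)
    (x' : EuclideanSpace ℝ (Fin 3)) (hx' : ‖x'‖ ≤ Real.sqrt 3 * H / 2)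
    (s θ φ : ℝ) (hs : s ∈ Set.Ioo (0 : ℝ) 1) (hθ : θ ∈ Set.Icc 0 Real.pi)
    (hφ : φ ∈ Set.Ico 0 (2 * Real.pi)) :
    AnalyticAt ℝ
      (fun p : ℝ × ℝ × ℝ => gS κ (sph (Real.sqrt 3 * H / 2 / p.1) p.2.1 p.2.2) x')
      (s, θ, φ) :=
  analyticAt_gS_in_s_theta_phi_general H κ hH x' hx' s θ φ hs
end
end
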